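/- arXiv:1109.5348 — 2 statements merged into one kernel-verified Lean document; each statement's English description precedes it below -/
import Mathlib

section
/- For every p ∈ (1,2) there exists a constant C = C(p) > 0, depending only on p, such that for every positive integer n and every s ∈ ℝ, |Φ_n'(s)|² ≤ C · Φ_n''(s) · Φ_n(s). -/
/-!
Since `Φ_n(s) = n^{-p} Φ_1(n s)`, both sides of the inequality scale by the same factor
`n^{2-2p}`, so only `n = 1` matters. There the polynomial piece matches `|s|^p` to second
order at `|s| = 1`, so `Φ_1` is `C²` with derivatives computed piece by piece. For `|s| > 1`
one has exactly `(p-1) Φ_1'^2 = p Φ_1'' Φ_1`; for `|s| ≤ 1`, `Φ_1'^2 ≤ 9` while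
`Φ_1'' Φ_1 ≥ (p-1)(2-p)/4`. Hence `C = 36 / ((p-1)(2-p))` works.
-/

open Set

/-- The `C²` regularization of `s ↦ |s|^p` from the proof of Lemma 3.2. -/
noncomputable def Phi (p : ℝ) (n : ℕ) (s : ℝ) : ℝ :=
  if 1 / (n : ℝ) < |s| then |s| ^ p
  else p * (p - 2) / (8 * (n : ℝ) ^ p) * ((n : ℝ) ^ 2 * s ^ 2 - 1) ^ 2
      + p / (2 * (n : ℝ) ^ p) * ((n : ℝ) ^ 2 * s ^ 2 - 1) + 1 / (n : ℝ) ^ p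

theorem hasDerivAt_ite_lt {ρ f g : ℝ → ℝ} {f' g' r x : ℝ} (hρ : Continuous ρ)
    (hf : ρ x ≤ r → HasDerivAt f f' x) (hg : r ≤ ρ x → HasDerivAt g g' x)
    (hfg : ∀ y, ρ y = r → f y = g y) (hfg' : ρ x = r → f' = g') :
    HasDerivAt (fun y => if r < ρ y then g y else f y) (if r < ρ x then g' else f') x := by
  rcases lt_trichotomy r (ρ x) with hx | hx | hx
  · rw [if_pos hx]
    refine (hg hx.le).congr_of_eventuallyEq ?_
    filter_upwards [(isOpen_lt continuous_const hρ).mem_nhds hx] with y hy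
    rw [if_pos hy]
  · rw [if_neg (not_lt.2 hx.ge)]
    have hle : HasDerivWithinAt (fun y => if r < ρ y then g y else f y) f' {y | ρ y ≤ r} x :=
      (hf hx.ge).hasDerivWithinAt.congr (fun y hy => if_neg (not_lt.2 hy)) (if_neg (not_lt.2 hx.ge))
    have hge : HasDerivWithinAt (fun y => if r < ρ y then g y else f y) f' {y | r ≤ ρ y} x := by
      rw [hfg' hx.symm]
      refine (hg hx.le).hasDerivWithinAt.congr (fun y hy => ?_) ?_
      · rcases (show r ≤ ρ y from hy).lt_or_eq with hy | hy
        · exact if_pos hy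
        · rw [if_neg (not_lt.2 hy.ge), hfg y hy.symm]
      · rw [if_neg (not_lt.2 hx.ge), hfg x hx.symm]
    have hunion : {y | ρ y ≤ r} ∪ {y | r ≤ ρ y} = univ :=
      eq_univ_of_forall fun y => le_total (ρ y) r
    simpa only [hunion, hasDerivWithinAt_univ] using hle.union hge
  · rw [if_neg (not_lt.2 hx.le)]
    refine (hf hx.le).congr_of_eventuallyEq ?_
    filter_upwards [(isOpen_lt hρ continuous_const).mem_nhds hx] with y hy
    rw [if_neg (not_lt.2 hy.le)]

theorem hasDerivAt_abs_rpow_mul_self (q : ℝ) {x : ℝ} (hx : x ≠ 0) :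
    HasDerivAt (fun y => |y| ^ q * y) ((q + 1) * |x| ^ q) x := by
  have habs : |x| ≠ 0 := abs_ne_zero.2 hx
  have h := ((hasDerivAt_abs hx).rpow_const (p := q) (Or.inl habs)).mul (hasDerivAt_id x)
  refine h.congr_deriv ?_
  have hsign : (SignType.sign x : ℝ) * x = |x| := sign_mul_self x
  rw [id, Real.rpow_sub_one habs]
  calc (SignType.sign x : ℝ) * q * (|x| ^ q / |x|) * x + |x| ^ q * 1
      = q * |x| ^ q * ((SignType.sign x : ℝ) * x / |x|) + |x| ^ q := by ring
    _ = (q + 1) * |x| ^ q := by rw [hsign, div_self habs]; ring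

theorem abs_rpow_sub_two_mul_sq {x : ℝ} (hx : x ≠ 0) (p : ℝ) :
    |x| ^ (p - 2) * x ^ 2 = |x| ^ p := by
  rw [← sq_abs, ← Real.rpow_natCast, ← Real.rpow_add (abs_pos.2 hx)]
  norm_num

theorem sq_eq_one_of_abs_eq_one {x : ℝ} (hx : |x| = 1) : x ^ 2 = 1 := by
  rw [← sq_abs, hx, one_pow]

theorem hasDerivAt_sq_sub_one (x : ℝ) : HasDerivAt (fun y : ℝ => y ^ 2 - 1) (2 * x) x := by
  simpa using (hasDerivAt_pow 2 x).sub_const 1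

theorem deriv_const_mul_comp_mul_left (a c : ℝ) (f : ℝ → ℝ) :
    deriv (fun s => a * f (c * s)) = fun s => a * c * deriv f (c * s) := by
  funext s
  rw [deriv_const_mul_field']
  simp only [deriv_comp_mul_left, smul_eq_mul, mul_assoc]

theorem Phi_one (p x : ℝ) :
    Phi p 1 x = if 1 < |x| then |x| ^ p
      else p * (p - 2) / 8 * (x ^ 2 - 1) ^ 2 + p / 2 * (x ^ 2 - 1) + 1 := by
  simp only [Phi, Nat.cast_one, div_one, Real.one_rpow, one_pow, one_mul, mul_one]

theorem Phi_eq_inv_rpow_mul_Phi_one {p : ℝ} {n : ℕ} (hn : 0 < n) :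
    Phi p n = fun s => ((n : ℝ) ^ p)⁻¹ * Phi p 1 (n * s) := by
  have hN : (0 : ℝ) < n := by exact_mod_cast hn
  have hNp : (n : ℝ) ^ p ≠ 0 := (Real.rpow_pos_of_pos hN p).ne'
  funext s
  have hcond : 1 / (n : ℝ) < |s| ↔ 1 < |n * s| := by
    rw [abs_mul, abs_of_pos hN, div_lt_iff₀' hN]
  rw [Phi, Phi_one]
  by_cases hs : 1 / (n : ℝ) < |s|
  · rw [if_pos hs, if_pos (hcond.1 hs), abs_mul, abs_of_pos hN, Real.mul_rpow hN.le (abs_nonneg s),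
      inv_mul_cancel_left₀ hNp]
  · rw [if_neg hs, if_neg (hcond.not.1 hs)]
    ring

noncomputable def phiDeriv (p x : ℝ) : ℝ :=
  if 1 < |x| then p * |x| ^ (p - 2) * x else p * x * ((p - 2) * (x ^ 2 - 1) / 2 + 1)

noncomputable def phiDeriv2 (p x : ℝ) : ℝ :=
  if 1 < |x| then p * (p - 1) * |x| ^ (p - 2) else p * ((p - 2) * (3 * x ^ 2 - 1) / 2 + 1)

theorem hasDerivAt_Phi_one {p : ℝ} (hp : 1 < p) (x : ℝ) :
    HasDerivAt (Phi p 1) (phiDeriv p x) x := by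
  have hPhi : Phi p 1 = fun y => if 1 < |y| then |y| ^ p
      else p * (p - 2) / 8 * (y ^ 2 - 1) ^ 2 + p / 2 * (y ^ 2 - 1) + 1 := funext (Phi_one p)
  rw [hPhi, phiDeriv]
  refine hasDerivAt_ite_lt continuous_abs (fun _ => ?_) (fun _ => hasDerivAt_abs_rpow x hp)
    (fun y hy => ?_) (fun hx => ?_)
  · have hq := hasDerivAt_sq_sub_one x
    exact ((((hq.pow 2).const_mul _).add (hq.const_mul _)).add_const 1).congr_deriv (by ring)
  · rw [sq_eq_one_of_abs_eq_one hy, hy, Real.one_rpow]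
    ring
  · rw [sq_eq_one_of_abs_eq_one hx, hx, Real.one_rpow]
    ring

theorem hasDerivAt_phiDeriv {p : ℝ} (x : ℝ) :
    HasDerivAt (phiDeriv p) (phiDeriv2 p x) x := by
  unfold phiDeriv phiDeriv2
  refine hasDerivAt_ite_lt continuous_abs (fun _ => ?_) (fun hx => ?_)
    (fun y hy => ?_) (fun hx => ?_)
  · have hq := hasDerivAt_sq_sub_one x
    exact ((((hasDerivAt_id' x).const_mul p).mul
      (((hq.const_mul (p - 2)).div_const 2).add_const 1))).congr_deriv (by ring)
  · have h := (hasDerivAt_abs_rpow_mul_self (p - 2) (abs_pos.1 (one_pos.trans_le hx))).const_mul p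
    rw [show p - 2 + 1 = p - 1 by ring] at h
    simpa only [mul_assoc] using h
  · rw [sq_eq_one_of_abs_eq_one hy, hy, Real.one_rpow]
    ring
  · rw [sq_eq_one_of_abs_eq_one hx, hx, Real.one_rpow]
    ring

theorem phiDeriv_sq_le_nine {p x : ℝ} (hp1 : 1 ≤ p) (hp2 : p ≤ 2) (hx : |x| ≤ 1) :
    phiDeriv p x ^ 2 ≤ 9 := by
  have hx2 : x ^ 2 ≤ 1 := by rw [← sq_abs]; nlinarith [abs_nonneg x]
  have hA1 : 1 ≤ (p - 2) * (x ^ 2 - 1) / 2 + 1 := by nlinarith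
  have hA2 : (p - 2) * (x ^ 2 - 1) / 2 + 1 ≤ 3 / 2 := by nlinarith
  have hpx : (p * x) ^ 2 ≤ 4 := by nlinarith
  rw [phiDeriv, if_neg (not_lt.2 hx), mul_pow]
  nlinarith [sq_nonneg (p * x)]

theorem le_phiDeriv2_mul_Phi_one {p x : ℝ} (hp1 : 1 ≤ p) (hp2 : p ≤ 2) (hx : |x| ≤ 1) :
    (p - 1) * (2 - p) / 4 ≤ phiDeriv2 p x * Phi p 1 x := by
  have hx2 : x ^ 2 ≤ 1 := by rw [← sq_abs]; nlinarith [abs_nonneg x]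
  rw [phiDeriv2, Phi_one, if_neg (not_lt.2 hx), if_neg (not_lt.2 hx)]
  have hB : p - 1 ≤ (p - 2) * (3 * x ^ 2 - 1) / 2 + 1 := by nlinarith
  have hQ : (2 - p) / 4 ≤ p * (p - 2) / 8 * (x ^ 2 - 1) ^ 2 + p / 2 * (x ^ 2 - 1) + 1 := by
    nlinarith [sq_nonneg x, mul_nonneg (sub_nonneg.2 hp2) (sub_nonneg.2 hx2)]
  calc (p - 1) * (2 - p) / 4 = 1 * (p - 1) * ((2 - p) / 4) := by ring
    _ ≤ _ := by
      gcongr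
      exact mul_nonneg (by linarith) (by linarith)

theorem sub_one_mul_phiDeriv_sq {p x : ℝ} (hx : 1 < |x|) :
    (p - 1) * phiDeriv p x ^ 2 = p * (phiDeriv2 p x * Phi p 1 x) := by
  rw [phiDeriv, phiDeriv2, Phi_one, if_pos hx, if_pos hx, if_pos hx,
    ← abs_rpow_sub_two_mul_sq (abs_pos.1 (one_pos.trans hx)) p]
  ring

theorem phiDeriv_sq_le {p : ℝ} (hp1 : 1 < p) (hp2 : p < 2) (x : ℝ) :
    phiDeriv p x ^ 2 ≤ 36 / ((p - 1) * (2 - p)) * phiDeriv2 p x * Phi p 1 x := by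
  set C := 36 / ((p - 1) * (2 - p)) with hC
  have hpos : 0 < (p - 1) * (2 - p) := mul_pos (by linarith) (by linarith)
  rw [mul_assoc]
  by_cases hx : 1 < |x|
  · have hCp : p ≤ C * (p - 1) := by
      rw [div_mul_eq_mul_div, le_div_iff₀ hpos]
      nlinarith
    have hid := sub_one_mul_phiDeriv_sq (p := p) hx
    have hnonneg : 0 ≤ phiDeriv2 p x * Phi p 1 x := by nlinarith [sq_nonneg (phiDeriv p x)]
    refine le_of_mul_le_mul_left ?_ (sub_pos.2 hp1)
    calc (p - 1) * phiDeriv p x ^ 2 = p * (phiDeriv2 p x * Phi p 1 x) := hid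
      _ ≤ C * (p - 1) * (phiDeriv2 p x * Phi p 1 x) := by gcongr
      _ = (p - 1) * (C * (phiDeriv2 p x * Phi p 1 x)) := by ring
  · calc _ ≤ 9 := phiDeriv_sq_le_nine hp1.le hp2.le (not_lt.1 hx)
      _ = C * ((p - 1) * (2 - p) / 4) := by
        rw [hC, div_mul_div_comm, mul_comm (36 : ℝ), mul_div_mul_left _ _ hpos.ne']; norm_num
      _ ≤ _ := by gcongr; exact le_phiDeriv2_mul_Phi_one hp1.le hp2.le (not_lt.1 hx)

theorem stmt_3 (p : ℝ) (hp1 : 1 < p) (hp2 : p < 2) :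
    ∃ C > (0 : ℝ), ∀ n : ℕ, 0 < n → ∀ s : ℝ,
      |deriv (Phi p n) s| ^ 2 ≤ C * deriv (deriv (Phi p n)) s * Phi p n s := by
  have hpos : 0 < (p - 1) * (2 - p) := mul_pos (by linarith) (by linarith)
  refine ⟨36 / ((p - 1) * (2 - p)), div_pos (by norm_num) hpos, fun n hn s => ?_⟩
  have hderiv : deriv (Phi p 1) = phiDeriv p := funext fun x => (hasDerivAt_Phi_one hp1 x).deriv
  have hderiv2 : deriv (phiDeriv p) = phiDeriv2 p := funext fun x => (hasDerivAt_phiDeriv x).deriv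
  rw [Phi_eq_inv_rpow_mul_Phi_one hn, deriv_const_mul_comp_mul_left, hderiv,
    deriv_const_mul_comp_mul_left, hderiv2, sq_abs]
  set a : ℝ := ((n : ℝ) ^ p)⁻¹ * n
  calc (a * phiDeriv p (n * s)) ^ 2 = a ^ 2 * phiDeriv p (n * s) ^ 2 := by ring
    _ ≤ a ^ 2 * (36 / ((p - 1) * (2 - p)) * phiDeriv2 p (n * s) * Phi p 1 (n * s)) := by
      gcongr; exact phiDeriv_sq_le hp1 hp2 _
    _ = _ := by ring
end

section
/- For every p ∈ (1,2) there exists a constant C = C(p) > 0, depending only on p, such that for every positive integer n and every s ∈ ℝ, |Φ_n'(s)| ≤ C · (Φ_n(s))^{(p−1)/p}. -/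
/-!
Since `Φ_n(s) = n^{-p} Φ_1(n s)`, both `Φ_n'(s) = n^{1-p} Φ_1'(n s)` and
`Φ_n(s)^{(p-1)/p} = n^{1-p} Φ_1(n s)^{(p-1)/p}` carry the same factor, so it suffices to treat
`n = 1`. For `|t| ≥ 1` we have `Φ_1(t) = |t|^p` and `|Φ_1'(t)| = p Φ_1(t)^{(p-1)/p}` exactly. On
`[-1, 1]`, `Φ_1` is a polynomial with `|Φ_1'| ≤ 2p` that increases in `|t|`, hence is bounded below
by `Φ_1(0) = (2-p)(4-p)/8 > 0`.
-/

open Filter Topology Set Real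

theorem hasDerivAt_of_eventuallyEq_Iic_of_eventuallyEq_Ici {f g h : ℝ → ℝ} {a d : ℝ}
    (hg : HasDerivAt g d a) (hh : HasDerivAt h d a)
    (hfg : f =ᶠ[𝓝[≤] a] g) (hfh : f =ᶠ[𝓝[≥] a] h) : HasDerivAt f d a := by
  have := (hg.hasDerivWithinAt.congr_of_eventuallyEq_of_mem hfg self_mem_Iic).union
    (hh.hasDerivWithinAt.congr_of_eventuallyEq_of_mem hfh self_mem_Ici)
  rwa [Iic_union_Ici, hasDerivWithinAt_univ] at this

noncomputable def phiPoly (p t : ℝ) : ℝ :=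
  p * (p - 2) / 8 * (t ^ 2 - 1) ^ 2 + p / 2 * (t ^ 2 - 1) + 1

section phiPoly

variable {p t : ℝ}

theorem hasDerivAt_phiPoly (p t : ℝ) :
    HasDerivAt (phiPoly p) (p * t * (1 + (p - 2) / 2 * (t ^ 2 - 1))) t := by
  have hu := (hasDerivAt_pow 2 t).sub_const 1
  have := ((hu.pow 2).const_mul (p * (p - 2) / 8)).add (hu.const_mul (p / 2)) |>.add_const 1
  exact this.congr_deriv (by ring)

theorem phiPoly_zero : phiPoly p 0 = (2 - p) * (4 - p) / 8 := by
  unfold phiPoly; ring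

theorem phiPoly_zero_pos (hp : p < 2) : 0 < phiPoly p 0 := by
  rw [phiPoly_zero]; nlinarith

theorem phiPoly_zero_le (hp0 : 0 ≤ p) (hp2 : p ≤ 2) (ht : |t| ≤ 1) :
    phiPoly p 0 ≤ phiPoly p t := by
  have hv : t ^ 2 ≤ 1 := (sq_le_one_iff_abs_le_one t).2 ht
  have key : phiPoly p t - phiPoly p 0 = p * t ^ 2 * ((2 - p) * (2 - t ^ 2) + 4) / 8 := by
    unfold phiPoly; ring
  have : 0 ≤ p * t ^ 2 * ((2 - p) * (2 - t ^ 2) + 4) := by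
    have : 0 ≤ (2 - p) * (2 - t ^ 2) := mul_nonneg (by linarith) (by linarith)
    positivity
  linarith

theorem abs_deriv_phiPoly_le (hp0 : 0 ≤ p) (hp2 : p ≤ 2) (ht : |t| ≤ 1) :
    |deriv (phiPoly p) t| ≤ 2 * p := by
  have hv : t ^ 2 ≤ 1 := (sq_le_one_iff_abs_le_one t).2 ht
  have hfac : 0 ≤ 1 + (p - 2) / 2 * (t ^ 2 - 1) := by nlinarith
  have hfac' : 1 + (p - 2) / 2 * (t ^ 2 - 1) ≤ 2 := by nlinarith [sq_nonneg t]
  rw [(hasDerivAt_phiPoly p t).deriv, abs_mul, abs_mul, abs_of_nonneg hp0, abs_of_nonneg hfac]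
  calc p * |t| * (1 + (p - 2) / 2 * (t ^ 2 - 1)) ≤ p * 1 * 2 := by gcongr
    _ = 2 * p := by ring

end phiPoly

section Phi

variable {p : ℝ}

theorem Phi_neg (p : ℝ) (n : ℕ) (s : ℝ) : Phi p n (-s) = Phi p n s := by
  simp only [Phi, abs_neg, neg_sq]

theorem deriv_Phi_neg (p : ℝ) (n : ℕ) (s : ℝ) : deriv (Phi p n) (-s) = -deriv (Phi p n) s := by
  have h := deriv_comp_neg (Phi p n) s
  simp only [Phi_neg] at h
  linarith

theorem Phi_one_eq_ite (p t : ℝ) : Phi p 1 t = if 1 < |t| then |t| ^ p else phiPoly p t := by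
  simp [Phi, phiPoly]

theorem Phi_one_of_abs_le {t : ℝ} (ht : |t| ≤ 1) : Phi p 1 t = phiPoly p t := by
  rw [Phi_one_eq_ite, if_neg ht.not_gt]

theorem Phi_one_of_one_le {t : ℝ} (ht : 1 ≤ t) : Phi p 1 t = t ^ p := by
  rcases ht.eq_or_lt with rfl | ht
  · rw [Phi_one_of_abs_le abs_one.le, one_rpow]; unfold phiPoly; ring
  · rw [Phi_one_eq_ite, abs_of_pos (by linarith), if_pos ht]

theorem Phi_one_nonneg (hp0 : 0 ≤ p) (hp2 : p ≤ 2) (t : ℝ) : 0 ≤ Phi p 1 t := by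
  rw [Phi_one_eq_ite]
  split_ifs with ht
  · positivity
  · have := phiPoly_zero_le hp0 hp2 (not_lt.1 ht)
    rw [phiPoly_zero] at this
    nlinarith

theorem hasDerivAt_Phi_one_of_one_le {t : ℝ} (ht : 1 ≤ t) :
    HasDerivAt (Phi p 1) (p * t ^ (p - 1)) t := by
  have hrpow := Real.hasDerivAt_rpow_const (p := p) (Or.inl (by positivity : t ≠ 0))
  rcases ht.eq_or_lt with rfl | ht
  · refine hasDerivAt_of_eventuallyEq_Iic_of_eventuallyEq_Ici
      ((hasDerivAt_phiPoly p 1).congr_deriv (by simp)) hrpow ?_ ?_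
    · filter_upwards [mem_nhdsWithin_of_mem_nhds (Ioi_mem_nhds (by norm_num : (-1 : ℝ) < 1)),
        self_mem_nhdsWithin] with x hx₁ hx₂
      exact Phi_one_of_abs_le (abs_le.2 ⟨hx₁.le, hx₂⟩)
    · filter_upwards [self_mem_nhdsWithin] with x hx
      exact Phi_one_of_one_le hx
  · refine hrpow.congr_of_eventuallyEq ?_
    filter_upwards [Ioi_mem_nhds ht] with x hx
    exact Phi_one_of_one_le hx.le

theorem abs_deriv_Phi_one_of_one_le_abs (hp0 : 0 < p) {t : ℝ} (ht : 1 ≤ |t|) :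
    |deriv (Phi p 1) t| = p * Phi p 1 t ^ ((p - 1) / p) := by
  wlog htpos : 0 ≤ t generalizing t
  · rw [← neg_neg t, deriv_Phi_neg, abs_neg, Phi_neg]
    exact this (by rwa [abs_neg]) (by linarith)
  rw [abs_of_nonneg htpos] at ht
  rw [(hasDerivAt_Phi_one_of_one_le ht).deriv, Phi_one_of_one_le ht, ← rpow_mul (by linarith),
    mul_div_cancel₀ _ hp0.ne', abs_of_nonneg (by positivity)]

theorem abs_deriv_Phi_one_le (hp1 : 1 < p) (hp2 : p < 2) (t : ℝ) :
    |deriv (Phi p 1) t| ≤ 2 * p / phiPoly p 0 ^ ((p - 1) / p) * Phi p 1 t ^ ((p - 1) / p) := by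
  set e := (p - 1) / p
  have he : 0 ≤ e := div_nonneg (by linarith) (by linarith)
  have hm := phiPoly_zero_pos hp2
  have hme : 0 < phiPoly p 0 ^ e := rpow_pos_of_pos hm e
  rcases le_or_gt 1 |t| with ht | ht
  · rw [abs_deriv_Phi_one_of_one_le_abs (by linarith) ht]
    have hm1 : phiPoly p 0 ^ e ≤ 1 := rpow_le_one hm.le (by rw [phiPoly_zero]; nlinarith) he
    refine mul_le_mul_of_nonneg_right ?_ (rpow_nonneg (Phi_one_nonneg (by linarith) hp2.le t) _)
    rw [le_div_iff₀ hme]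
    nlinarith
  · have hderiv : deriv (Phi p 1) t = deriv (phiPoly p) t := by
      refine EventuallyEq.deriv_eq ?_
      filter_upwards [Ioo_mem_nhds (neg_lt_of_abs_lt ht) (lt_of_abs_lt ht)] with x hx
      exact Phi_one_of_abs_le (abs_le.2 ⟨hx.1.le, hx.2.le⟩)
    calc |deriv (Phi p 1) t| ≤ 2 * p := hderiv ▸ abs_deriv_phiPoly_le (by linarith) hp2.le ht.le
      _ = 2 * p / phiPoly p 0 ^ e * phiPoly p 0 ^ e := by field_simp
      _ ≤ 2 * p / phiPoly p 0 ^ e * Phi p 1 t ^ e := by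
        gcongr
        rw [Phi_one_of_abs_le ht.le]
        exact phiPoly_zero_le (by linarith) hp2.le ht.le

theorem Phi_eq_rpow_neg_mul_Phi_one {n : ℕ} (hn : 0 < n) (s : ℝ) :
    Phi p n s = (n : ℝ) ^ (-p) * Phi p 1 (n * s) := by
  have hN : (0 : ℝ) < n := by exact_mod_cast hn
  have hiff : 1 / (n : ℝ) < |s| ↔ 1 < n * |s| := by rw [div_lt_iff₀ hN, mul_comm]
  rw [Phi_one_eq_ite, Phi, abs_mul, abs_of_pos hN]
  by_cases hs : 1 / (n : ℝ) < |s|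
  · rw [if_pos hs, if_pos (hiff.1 hs), mul_rpow hN.le (abs_nonneg s), ← mul_assoc,
      ← rpow_add hN, neg_add_cancel, rpow_zero, one_mul]
  · rw [if_neg hs, if_neg (hiff.not.1 hs), rpow_neg hN.le]
    unfold phiPoly
    field_simp

theorem deriv_Phi {n : ℕ} (hn : 0 < n) (s : ℝ) :
    deriv (Phi p n) s = (n : ℝ) ^ (1 - p) * deriv (Phi p 1) (n * s) := by
  have hN : (0 : ℝ) < n := by exact_mod_cast hn
  rw [funext (Phi_eq_rpow_neg_mul_Phi_one hn), deriv_const_mul_field, deriv_comp_mul_left,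
    smul_eq_mul, ← mul_assoc, show 1 - p = -p + 1 by ring, rpow_add_one hN.ne']

theorem Phi_rpow_eq {n : ℕ} (hn : 0 < n) (hp0 : 0 < p) (hp2 : p ≤ 2) (s : ℝ) :
    Phi p n s ^ ((p - 1) / p) = (n : ℝ) ^ (1 - p) * Phi p 1 (n * s) ^ ((p - 1) / p) := by
  have hN : (0 : ℝ) < n := by exact_mod_cast hn
  rw [Phi_eq_rpow_neg_mul_Phi_one hn, mul_rpow (rpow_nonneg hN.le _) (Phi_one_nonneg hp0.le hp2 _),
    ← rpow_mul hN.le]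
  congr 2
  field_simp
  ring

end Phi

theorem stmt_4 (p : ℝ) (hp1 : 1 < p) (hp2 : p < 2) :
    ∃ C > (0 : ℝ), ∀ n : ℕ, 0 < n → ∀ s : ℝ,
      |deriv (Phi p n) s| ≤ C * Phi p n s ^ ((p - 1) / p) := by
  refine ⟨2 * p / phiPoly p 0 ^ ((p - 1) / p),
    div_pos (by linarith) (rpow_pos_of_pos (phiPoly_zero_pos hp2) _), fun n hn s => ?_⟩
  have hN : (0 : ℝ) < n := by exact_mod_cast hn
  rw [deriv_Phi hn, Phi_rpow_eq hn (by linarith) hp2.le, abs_mul,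
    abs_of_pos (rpow_pos_of_pos hN _), mul_left_comm]
  exact mul_le_mul_of_nonneg_left (abs_deriv_Phi_one_le hp1 hp2 _) (rpow_nonneg hN.le _)
end
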